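/- If |Θ| ≥ 3, then the double negation of any belief structure m on Θ is the vacuous belief structure: m̄̄(Θ) = 1 and m̄̄(B) = 0 for all B ≠ Θ. -/

import Mathlib

/-!
A set with at least two points has full negation, a singleton `{a}` has negation `{a}ᶜ`, and the
empty set is never counted. Hence `m̄` lives on sets of size at least `|Θ| - 1 ≥ 2`, all of which
negate to `Θ`, so `m̄̄` puts all the mass of `m̄` on `Θ`; and negation preserves total mass
because it only reassigns the mass of each nonempty focal set.
-/

open Finset

variable {α : Type*} [Fintype α] [DecidableEq α]

/-- Set-negation: neg(A) = ⋃_{θ∈A} (Θ∖{θ}). -/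
def negSet (A : Finset α) : Finset α := A.biUnion (fun θ => Finset.univ \ {θ})

/-- Negation of a belief structure: m̄(B) = ∑_{A nonempty, neg(A)=B} m(A). -/
noncomputable def negBS (m : Finset α → ℝ) (B : Finset α) : ℝ :=
  ∑ A ∈ Finset.univ.filter (fun A : Finset α => A.Nonempty ∧ negSet A = B), m A

theorem mem_negSet {A : Finset α} {x : α} : x ∈ negSet A ↔ ∃ θ ∈ A, x ≠ θ := by
  simp [negSet]

theorem negSet_singleton (a : α) : negSet {a} = {a}ᶜ := by
  ext x
  simp [mem_negSet]

theorem negSet_eq_univ_of_nontrivial {A : Finset α} (hA : A.Nontrivial) : negSet A = univ := by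
  obtain ⟨a, ha, b, hb, hab⟩ := hA
  refine eq_univ_of_forall fun x => mem_negSet.mpr ?_
  by_cases hx : x = a
  · exact ⟨b, hb, hx ▸ hab⟩
  · exact ⟨a, ha, hx⟩

theorem card_le_card_negSet_add_one {A : Finset α} (hA : A.Nonempty) :
    Fintype.card α ≤ (negSet A).card + 1 := by
  obtain ⟨a, rfl⟩ | hA := hA.exists_eq_singleton_or_nontrivial
  · rw [negSet_singleton, card_compl, card_singleton]
    omega
  · rw [negSet_eq_univ_of_nontrivial hA, card_univ]
    omega

theorem negBS_eq_zero_of_card_add_one_lt (m : Finset α → ℝ) {B : Finset α}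
    (hB : B.card + 1 < Fintype.card α) : negBS m B = 0 := by
  refine sum_eq_zero fun A hA => ?_
  obtain ⟨hne, rfl⟩ := (mem_filter.mp hA).2
  exact absurd (card_le_card_negSet_add_one hne) (by omega)

theorem sum_negBS {m : Finset α → ℝ} (hm : m ∅ = 0) : ∑ B, negBS m B = ∑ A, m A := by
  have hne : ∀ A ∈ (univ : Finset (Finset α)), m A ≠ 0 → A.Nonempty := fun A _ hA =>
    nonempty_iff_ne_empty.mpr fun h => hA (h ▸ hm)
  rw [← sum_filter_of_ne hne, ← sum_fiberwise_of_maps_to (s := univ.filter (·.Nonempty))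
    (g := negSet) fun _ _ => mem_univ _]
  simp only [negBS, filter_filter]

theorem nonempty_and_negSet_eq_univ_of_ne_zero {m : Finset α → ℝ}
    (hm : ∀ A : Finset α, A.card ≤ 1 → m A = 0) {A : Finset α} (hA : m A ≠ 0) :
    A.Nonempty ∧ negSet A = univ := by
  have h : A.Nontrivial := by
    rw [← one_lt_card_iff_nontrivial]
    by_contra h
    exact hA (hm A (not_lt.mp h))
  exact ⟨h.nonempty, negSet_eq_univ_of_nontrivial h⟩

theorem negBS_univ_eq_sum {m : Finset α → ℝ} (hm : ∀ A : Finset α, A.card ≤ 1 → m A = 0) :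
    negBS m univ = ∑ A, m A :=
  sum_filter_of_ne fun _ _ => nonempty_and_negSet_eq_univ_of_ne_zero hm

theorem negBS_eq_zero_of_ne_univ {m : Finset α → ℝ} (hm : ∀ A : Finset α, A.card ≤ 1 → m A = 0)
    {B : Finset α} (hB : B ≠ univ) : negBS m B = 0 := by
  refine sum_eq_zero fun A hA => ?_
  by_contra h
  exact hB ((mem_filter.mp hA).2.2 ▸ (nonempty_and_negSet_eq_univ_of_ne_zero hm h).2)

theorem double_negation_vacuous_general (m : Finset α → ℝ)
    (hcard : 3 ≤ Fintype.card α)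
    (hempty : m ∅ = 0)
    (hsum : ∑ A : Finset α, m A = 1) :
    negBS (negBS m) Finset.univ = 1 ∧
    ∀ B : Finset α, B ≠ Finset.univ → negBS (negBS m) B = 0 := by
  have hsmall : ∀ B : Finset α, B.card ≤ 1 → negBS m B = 0 := fun B hB =>
    negBS_eq_zero_of_card_add_one_lt m (by omega)
  refine ⟨?_, fun B hB => negBS_eq_zero_of_ne_univ hsmall hB⟩
  rw [negBS_univ_eq_sum hsmall, sum_negBS hempty, hsum]

theorem double_negation_vacuous (m : Finset α → ℝ)
    (hcard : 3 ≤ Fintype.card α)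
    (hempty : m ∅ = 0) (hnonneg : ∀ A, 0 ≤ m A ∧ m A ≤ 1)
    (hsum : ∑ A : Finset α, m A = 1) :
    negBS (negBS m) Finset.univ = 1 ∧
    ∀ B : Finset α, B ≠ Finset.univ → negBS (negBS m) B = 0 :=
  double_negation_vacuous_general m hcard hempty hsum
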